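/- arXiv:1501.05404 — 2 statements merged into one kernel-verified Lean document; each statement's English description precedes it below -/
import Mathlib

section
/- Let X be a Hausdorff uniform space and let μ ∈ M⁺(X) be a positive continuous linear functional on UCb(X). Then for all uniformly continuous functions f, h : X → ℝ one has |(Fμ)(f) − (Fμ)(h)|² ≤ 2⟨μ,1⟩ · (⟨μ,1⟩ − Re((Fμ)(f−h))), where (Fμ)(f) = ⟨μ, e^{if}⟩. -/
open Complex

noncomputable section

/-- The function `t ↦ e^{it}` is uniformly continuous on `ℝ`. -/
lemma uniformContinuous_exp_mul_I :
    UniformContinuous fun t : ℝ => Complex.exp (t * Complex.I) := by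
  rw [Metric.uniformContinuous_iff]
  intro ε hε
  refine ⟨min 1 (ε / 2), by positivity, fun {a b} h => ?_⟩
  have hab1 : |a - b| ≤ 1 := by
    have := (lt_min_iff.mp (by simpa [Real.dist_eq] using h)).1
    linarith [abs_nonneg (a - b), this]
  have key : ‖Complex.exp ((↑(a - b)) * Complex.I) - 1‖ ≤ 2 * |a - b| := by
    have h1 : ‖(↑(a - b) : ℂ) * Complex.I‖ = |a - b| := by
      rw [norm_mul, Complex.norm_I, mul_one, Complex.norm_real, Real.norm_eq_abs]
    have h2 := Complex.norm_exp_sub_one_le (x := (↑(a - b)) * Complex.I)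
      (by rw [h1]; exact hab1)
    rw [h1] at h2
    exact h2
  have hfactor : Complex.exp (↑a * Complex.I) - Complex.exp (↑b * Complex.I)
      = Complex.exp (↑b * Complex.I) * (Complex.exp ((↑(a - b)) * Complex.I) - 1) := by
    rw [mul_sub, mul_one, ← Complex.exp_add]
    push_cast
    ring_nf
  have habε : |a - b| < ε / 2 := by
    have := (lt_min_iff.mp (by simpa [Real.dist_eq] using h)).2
    exact this
  calc dist (Complex.exp (↑a * Complex.I)) (Complex.exp (↑b * Complex.I))
      = ‖Complex.exp (↑a * Complex.I) - Complex.exp (↑b * Complex.I)‖ := by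
        rw [Complex.dist_eq]
    _ = ‖Complex.exp (↑b * Complex.I)‖ *
          ‖Complex.exp ((↑(a - b)) * Complex.I) - 1‖ := by
        rw [hfactor, norm_mul]
    _ ≤ 2 * |a - b| := by
        rw [Complex.norm_exp_ofReal_mul_I, one_mul]; exact key
    _ < ε := by linarith

variable (X : Type*) [UniformSpace X]

/-- The space `UCb(X)` of bounded uniformly continuous complex-valued functions on a
uniform space `X`, realized as a (closed) subspace of the Banach space of bounded
continuous functions, so that it is itself a Banach space with the supremum norm. -/
def UCb : Submodule ℂ (BoundedContinuousFunction X ℂ) where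
  carrier := {f | UniformContinuous f}
  add_mem' := by
    intro f g hf hg
    exact ((hf : UniformContinuous f).add (hg : UniformContinuous g))
  zero_mem' := by
    exact (uniformContinuous_const : UniformContinuous fun _ : X => (0 : ℂ))
  smul_mem' := by
    intro c f hf
    exact ((hf : UniformContinuous f).const_smul c)

variable {X}

/-- For a uniformly continuous function `f : X → ℝ`, the element `e^{if}` of `UCb(X)`. -/
def expICf {f : X → ℝ} (hf : UniformContinuous f) : UCb X :=
  ⟨BoundedContinuousFunction.ofNormedAddCommGroup
      (fun x => Complex.exp ((f x : ℂ) * Complex.I))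
      ((uniformContinuous_exp_mul_I.comp hf).continuous) 1
      (fun x => le_of_eq (Complex.norm_exp_ofReal_mul_I (f x))),
   (uniformContinuous_exp_mul_I.comp hf)⟩

/-- The constant function `1` as an element of `UCb(X)`. -/
def oneUCb : UCb X :=
  ⟨BoundedContinuousFunction.const X (1 : ℂ), by
    exact (uniformContinuous_const : UniformContinuous fun _ : X => (1 : ℂ))⟩

/-- A functional `μ ∈ M(X) = UCb(X)'` is positive if it takes nonnegative (real) values
on nonnegative real-valued functions. -/
def IsPositiveFunctional {X : Type*} [UniformSpace X] (μ : UCb X →L[ℂ] ℂ) : Prop :=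
  ∀ g : UCb X, (∀ x : X, ∃ r : ℝ, 0 ≤ r ∧ (g : BoundedContinuousFunction X ℂ) x = r) →
    ∃ c : ℝ, 0 ≤ c ∧ μ g = c


/-!
Positivity of `μ` makes `(g, k) ↦ μ(ḡ k)` a positive semidefinite form, whence the
Cauchy–Schwarz inequality `|μ g|² ≤ μ 1 · μ |g|²`. For `g = e^{if} - e^{ih}` one has
`|g|² = 2 - 2 Re e^{i(f-h)}`, and the bound is exactly the claim.
-/

open ComplexConjugate
open scoped BoundedContinuousFunction

lemma le_mul_of_forall_quadratic_nonneg {a s N : ℝ} (ha : 0 ≤ a) (hN : 0 ≤ N)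
    (h : ∀ t : ℝ, 0 ≤ a * N * t ^ 2 - 2 * N * t + s) : N ≤ a * s := by
  have hdisc : discrim (a * N) (-(2 * N)) s ≤ 0 :=
    discrim_le_zero fun t => by linarith [h t, sq t]
  rw [discrim] at hdisc
  rcases hN.eq_or_lt with rfl | hN
  · simpa using mul_nonneg ha (by simpa using h 0)
  · nlinarith

lemma normSq_exp_mul_I_sub_exp_mul_I (s t : ℝ) :
    ((normSq (exp (s * I) - exp (t * I)) : ℝ) : ℂ) =
      2 - exp (↑(s - t) * I) - conj (exp (↑(s - t) * I)) := by
  apply Complex.ext <;>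
    simp only [normSq_apply, ofReal_re, ofReal_im, sub_re, sub_im, conj_re, conj_im, re_ofNat,
      im_ofNat, exp_ofReal_mul_I_re, exp_ofReal_mul_I_im, Real.cos_sub]
  · nlinarith [Real.sin_sq_add_cos_sq s, Real.sin_sq_add_cos_sq t]
  · ring

instance : Star (UCb X) where
  star g := ⟨star (g : X →ᵇ ℂ), isometry_conj.uniformContinuous.comp g.2⟩

@[simp]
lemma UCb.star_apply (g : UCb X) (x : X) :
    ((star g : UCb X) : X →ᵇ ℂ) x = conj ((g : X →ᵇ ℂ) x) := rfl

@[simp]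
lemma oneUCb_apply (x : X) : ((oneUCb : UCb X) : X →ᵇ ℂ) x = 1 := rfl

@[simp]
lemma expICf_apply {f : X → ℝ} (hf : UniformContinuous f) (x : X) :
    ((expICf hf : UCb X) : X →ᵇ ℂ) x = exp (f x * I) := rfl

namespace IsPositiveFunctional

variable {μ : UCb X →L[ℂ] ℂ}

lemma re_nonneg (hμ : IsPositiveFunctional μ) {g : UCb X}
    (hg : ∀ x, ∃ r : ℝ, 0 ≤ r ∧ (g : X →ᵇ ℂ) x = r) : 0 ≤ (μ g).re := by
  obtain ⟨c, hc, hμg⟩ := hμ g hg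
  simpa [hμg] using hc

lemma im_eq_zero (hμ : IsPositiveFunctional μ) {g : UCb X}
    (hg : ∀ x, ∃ r : ℝ, (g : X →ᵇ ℂ) x = r) : (μ g).im = 0 := by
  set M : ℝ := ‖(g : X →ᵇ ℂ)‖
  obtain ⟨c₁, -, h₁⟩ := hμ oneUCb fun x => ⟨1, zero_le_one, by simp⟩
  obtain ⟨c₂, -, h₂⟩ := hμ ((M : ℂ) • oneUCb + g) fun x => by
    obtain ⟨r, hr⟩ := hg x
    have hrM : |r| ≤ M := by
      simpa [hr] using BoundedContinuousFunction.norm_coe_le_norm (g : X →ᵇ ℂ) x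
    exact ⟨M + r, by linarith [neg_abs_le r], by simp [hr]⟩
  have hμg : μ g = c₂ - M * c₁ := by
    rw [← h₁, ← h₂, map_add, map_smul, smul_eq_mul]; ring
  simp [hμg]

lemma map_star (hμ : IsPositiveFunctional μ) (g : UCb X) : μ (star g) = conj (μ g) := by
  have hre : (μ (g + star g)).im = 0 := hμ.im_eq_zero fun x =>
    ⟨2 * ((g : X →ᵇ ℂ) x).re, by simp [add_conj]⟩
  have him : (μ (I • (g - star g))).im = 0 := hμ.im_eq_zero fun x =>
    ⟨-2 * ((g : X →ᵇ ℂ) x).im, by simp [sub_conj, mul_left_comm I]⟩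
  simp only [map_add, map_smul, map_sub, smul_eq_mul, add_im, mul_im, I_re, I_im, sub_re,
    sub_im] at hre him
  apply Complex.ext <;> simp <;> linarith

theorem normSq_map_le (hμ : IsPositiveFunctional μ) (g n : UCb X)
    (hn : ∀ x, (n : X →ᵇ ℂ) x = normSq ((g : X →ᵇ ℂ) x)) :
    normSq (μ g) ≤ (μ oneUCb).re * (μ n).re := by
  -- `0 ≤ μ |g - t μ g|²` for every real `t`: a quadratic in `t` with nonpositive discriminant.
  refine le_mul_of_forall_quadratic_nonneg (hμ.re_nonneg fun x => ⟨1, zero_le_one, rfl⟩)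
    (normSq_nonneg (μ g)) fun t => ?_
  let G : UCb X :=
    n - (t : ℂ) • (conj (μ g) • g + μ g • star g) + ((t ^ 2 * normSq (μ g) : ℝ) : ℂ) • oneUCb
  have hG : ∀ x, (G : X →ᵇ ℂ) x = normSq ((g : X →ᵇ ℂ) x - t * μ g) := by
    intro x
    simp only [G, hn, ← mul_conj, Submodule.coe_add, AddSubgroupClass.coe_sub, Submodule.coe_smul,
      BoundedContinuousFunction.add_apply, BoundedContinuousFunction.sub_apply,
      BoundedContinuousFunction.smul_apply, smul_eq_mul, UCb.star_apply, oneUCb_apply,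
      map_sub, map_mul, conj_ofReal, ofReal_mul, ofReal_pow]
    ring
  have hμG : (μ G).re = (μ oneUCb).re * normSq (μ g) * t ^ 2 - 2 * normSq (μ g) * t + (μ n).re := by
    simp only [G, map_add, map_sub, map_smul, smul_eq_mul, hμ.map_star, mul_comm (μ g),
      ← normSq_eq_conj_mul_self, add_re, sub_re, re_ofReal_mul, ofReal_re]
    ring
  rw [← hμG]
  exact hμ.re_nonneg fun x => ⟨_, normSq_nonneg _, hG x⟩

end IsPositiveFunctional

theorem fourier_dist_sq_le_of_positive_general {X : Type*} [UniformSpace X]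
    (μ : UCb X →L[ℂ] ℂ) (hμ : IsPositiveFunctional μ)
    (f h : X → ℝ) (hf : UniformContinuous f) (hh : UniformContinuous h) :
    ‖μ (expICf hf) - μ (expICf hh)‖ ^ 2 ≤
      2 * (μ (oneUCb (X := X))).re *
        ((μ (oneUCb (X := X))).re - (μ (expICf (hf.sub hh))).re) := by
  set P := expICf (hf.sub hh)
  have hn : ∀ x, ((2 • oneUCb - P - star P : UCb X) : X →ᵇ ℂ) x =
      normSq (((expICf hf - expICf hh : UCb X) : X →ᵇ ℂ) x) := by
    intro x
    simp [P, normSq_exp_mul_I_sub_exp_mul_I]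
  have hμn : (μ (2 • oneUCb - P - star P)).re = 2 * (μ oneUCb).re - 2 * (μ P).re := by
    simp [hμ.map_star]; ring
  have hcs := hμ.normSq_map_le _ _ hn
  rw [map_sub, hμn] at hcs
  rw [Complex.sq_norm]
  linarith

/-- For a positive functional `μ ∈ M⁺(X)` and uniformly continuous `f, h : X → ℝ` one has
`|(Fμ)(f) − (Fμ)(h)|² ≤ 2⟨μ,1⟩(⟨μ,1⟩ − Re (Fμ)(f−h))`, where `(Fμ)(f) = ⟨μ, e^{if}⟩`. -/
theorem fourier_dist_sq_le_of_positive {X : Type*} [UniformSpace X] [T2Space X]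
    (μ : UCb X →L[ℂ] ℂ) (hμ : IsPositiveFunctional μ)
    (f h : X → ℝ) (hf : UniformContinuous f) (hh : UniformContinuous h) :
    ‖μ (expICf hf) - μ (expICf hh)‖ ^ 2 ≤
      2 * (μ (oneUCb (X := X))).re *
        ((μ (oneUCb (X := X))).re - (μ (expICf (hf.sub hh))).re) :=
  fourier_dist_sq_le_of_positive_general μ hμ f h hf hh

end
end

section
/- Let X be a Hausdorff uniform space. For x ∈ X define η_x : UC(X,ℝ) → ℝ by η_x(f) = f(x). Then each η_x is uniformly continuous on X^∇ (so η_x ∈ (X^∇)^∇), and the resulting map η_X : X → (X^∇)^∇, x ↦ η_x, is injective and uniformly continuous, where both X^∇ = UC(X,ℝ) and (X^∇)^∇ = UC(X^∇,ℝ) carry the uniform structure of pointwise convergence. -/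
/-!
Uniformly continuous real functions separate the points of a T₀ uniform space: if the entourage
`V` misses `(x, y)`, a sequence of symmetric entourages with `W (n+1) ○ W (n+1) ⊆ W n ⊆ V`
generates a coarser, countably generated, hence pseudometrizable uniformity, and `dist x` for
that pseudometric is uniformly continuous and separates `x` from `y`.
-/

noncomputable section

/-- The uniform space dual `Y^∇ = UC(Y,ℝ)`, endowed with the uniform structure of
pointwise convergence (as a uniform subspace of the product `ℝ^Y`). -/
def UCdual (Y : Type*) [UniformSpace Y] : Type _ := {f : Y → ℝ // UniformContinuous f}

instance (Y : Type*) [UniformSpace Y] : UniformSpace (UCdual Y) :=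
  instUniformSpaceSubtype

open Filter Uniformity
open scoped SetRel

section Separation

variable {X : Type*} [uX : UniformSpace X]

theorem exists_entourage_seq {V : SetRel X X} (hV : V ∈ 𝓤 X) :
    ∃ W : ℕ → SetRel X X, (∀ n, W n ∈ 𝓤 X) ∧ (∀ n, (W n).IsSymm) ∧
      (∀ n, W (n + 1) ○ W (n + 1) ⊆ W n) ∧ W 0 ⊆ V := by
  choose! t ht hsymm hcomp using fun s (hs : s ∈ 𝓤 X) => comp_symm_mem_uniformity_sets hs
  set W : ℕ → SetRel X X := fun n => t^[n + 1] V
  have hWsucc (n : ℕ) : W (n + 1) = t (W n) := Function.iterate_succ_apply' t (n + 1) V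
  have hW (n : ℕ) : W n ∈ 𝓤 X := by
    induction n with
    | zero => exact ht V hV
    | succ n ih => rw [hWsucc]; exact ht _ ih
  refine ⟨W, hW, fun n => ?_, fun n => ?_, ?_⟩
  · cases n with
    | zero => exact hsymm V hV
    | succ n => rw [hWsucc]; exact hsymm _ (hW n)
  · rw [hWsucc]; exact hcomp _ (hW n)
  · have := isRefl_of_mem_uniformity (ht V hV)
    exact SetRel.left_subset_comp.trans (hcomp V hV)

theorem exists_le_uniformSpace_isCountablyGenerated {V : SetRel X X} (hV : V ∈ 𝓤 X) :
    ∃ u : UniformSpace X, uX ≤ u ∧ (𝓤[u]).IsCountablyGenerated ∧ V ∈ 𝓤[u] := by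
  obtain ⟨W, hW, hsymm, hcomp, hWV⟩ := exists_entourage_seq hV
  have hanti : Antitone W := antitone_nat_of_succ_le fun n => by
    have := isRefl_of_mem_uniformity (hW (n + 1))
    exact SetRel.left_subset_comp.trans (hcomp n)
  have hB : (⨅ n, 𝓟 (W n)).HasBasis (fun _ => True) W :=
    hasBasis_iInf_principal hanti.directed_ge
  let u : UniformSpace X := .ofCore <| .mk' (⨅ n, 𝓟 (W n))
    (fun r hr x => by
      obtain ⟨n, -, hn⟩ := hB.mem_iff.1 hr
      exact hn (refl_mem_uniformity (hW n)))
    (fun r hr => by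
      obtain ⟨n, -, hn⟩ := hB.mem_iff.1 hr
      have := hsymm n
      exact hB.mem_of_superset trivial fun p hp => hn ((W n).comm.1 hp))
    (fun r hr => by
      obtain ⟨n, -, hn⟩ := hB.mem_iff.1 hr
      exact ⟨W (n + 1), hB.mem_of_mem trivial, (hcomp n).trans hn⟩)
  refine ⟨u, le_iInf fun n => le_principal_iff.2 (hW n), ?_, hB.mem_of_superset trivial hWV⟩
  change (⨅ n, 𝓟 (W n)).IsCountablyGenerated
  infer_instance

theorem exists_uniformContinuous_ne_of_notMem_of_isCountablyGenerated
    [(𝓤 X).IsCountablyGenerated] {V : SetRel X X} (hV : V ∈ 𝓤 X) {x y : X} (hxy : (x, y) ∉ V) :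
    ∃ f : X → ℝ, UniformContinuous f ∧ f x ≠ f y := by
  let := UniformSpace.pseudoMetricSpace X
  refine ⟨dist x, uniformContinuous_const.dist uniformContinuous_id, fun h => hxy ?_⟩
  obtain ⟨ε, hε, hεV⟩ := Metric.mem_uniformity_dist.1 hV
  exact hεV (by rwa [← h, dist_self])

theorem exists_uniformContinuous_ne_of_notMem {V : SetRel X X} (hV : V ∈ 𝓤 X) {x y : X}
    (hxy : (x, y) ∉ V) : ∃ f : X → ℝ, UniformContinuous f ∧ f x ≠ f y := by
  obtain ⟨u, hle, hcg, hVu⟩ := exists_le_uniformSpace_isCountablyGenerated hV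
  obtain ⟨f, hf, hfxy⟩ :=
    @exists_uniformContinuous_ne_of_notMem_of_isCountablyGenerated X u hcg V hVu x y hxy
  exact ⟨f, Tendsto.mono_left hf hle, hfxy⟩

theorem exists_uniformContinuous_ne [T0Space X] {x y : X} (hxy : x ≠ y) :
    ∃ f : X → ℝ, UniformContinuous f ∧ f x ≠ f y := by
  obtain ⟨V, hV, hxyV⟩ := t0Space_iff_uniformity'.1 ‹_› hxy
  exact exists_uniformContinuous_ne_of_notMem hV hxyV

end Separation

/-- For a Hausdorff uniform space `X`, each evaluation map `η_x : X^∇ → ℝ`,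
`η_x(f) = f(x)`, is uniformly continuous (so `η_x ∈ (X^∇)^∇`), and the resulting map
`η_X : X → (X^∇)^∇`, `x ↦ η_x`, is injective and uniformly continuous, where both
`X^∇` and `(X^∇)^∇` carry the uniform structure of pointwise convergence. -/
theorem eta_injective_uniformContinuous (X : Type*) [UniformSpace X] [T2Space X] :
    (∀ x : X, UniformContinuous fun f : UCdual X => f.1 x) ∧
    Function.Injective (fun (x : X) => fun f : UCdual X => f.1 x) ∧
    UniformContinuous (fun (x : X) => fun f : UCdual X => f.1 x) := by
  refine ⟨fun x => ?_, fun x y hxy => ?_, uniformContinuous_pi.2 fun f => f.2⟩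
  · exact (Pi.uniformContinuous_proj _ x).comp uniformContinuous_subtype_val
  · by_contra hne
    obtain ⟨f, hf, hfxy⟩ := exists_uniformContinuous_ne hne
    exact hfxy (congrFun hxy ⟨f, hf⟩)

end
end
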